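/- Let ℋ = ℂ²⊗ℂ²⊗ℂ²⊗ℂ² with the action of Ĝ = SL(2,ℂ)⁴, and let u₁ = e₀₀₀₀+e₁₁₁₁, u₂ = e₀₁₁₀+e₁₀₀₁, u₃ = e₀₁₀₁+e₁₀₁₀, u₄ = e₀₀₁₁+e₁₁₀₀. Let λ₁, λ₂, λ₃, λ₄ ∈ ℂ with λ_i ≠ 0 for all i and λ₁ ∉ {±λ₂±λ₃±λ₄} (all four sign choices). Then the stabiliser in Ĝ of s = λ₁u₁+λ₂u₂+λ₃u₃+λ₄u₄ equals the subgroup of Ĝ generated by the four elements (J,J,J,J), (−I,−I,I,I), (−I,I,−I,I), (K,K,K,K), and this subgroup is finite of order 32. -/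

import Mathlib

/-- The Hilbert space of four qubits, in coordinates with respect to the basis
`e_{i₁i₂i₃i₄} = e_{i₁} ⊗ e_{i₂} ⊗ e_{i₃} ⊗ e_{i₄}` of `ℂ² ⊗ ℂ² ⊗ ℂ² ⊗ ℂ²`. -/
abbrev H4 : Type := Fin 2 → Fin 2 → Fin 2 → Fin 2 → ℂ

abbrev SL2 := Matrix.SpecialLinearGroup (Fin 2) ℂ

/-- The group `Ĝ = SL(2,ℂ)⁴`. -/
abbrev G4 := SL2 × SL2 × SL2 × SL2

/-- The action of `SL(2,ℂ)⁴` on `ℂ² ⊗ ℂ² ⊗ ℂ² ⊗ ℂ²`, given in coordinates: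
it is the linear extension of `(A,B,C,D)·(v₁⊗v₂⊗v₃⊗v₄) = Av₁⊗Bv₂⊗Cv₃⊗Dv₄`. -/
noncomputable def act (g : G4) (x : H4) : H4 := fun i1 i2 i3 i4 =>
  ∑ j1 : Fin 2, ∑ j2 : Fin 2, ∑ j3 : Fin 2, ∑ j4 : Fin 2,
    g.1 i1 j1 * g.2.1 i2 j2 * g.2.2.1 i3 j3 * g.2.2.2 i4 j4 * x j1 j2 j3 j4

/-- The basis vector `e_{i₁i₂i₃i₄}`. -/
def e (i1 i2 i3 i4 : Fin 2) : H4 := fun j1 j2 j3 j4 =>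
  if j1 = i1 ∧ j2 = i2 ∧ j3 = i3 ∧ j4 = i4 then 1 else 0

noncomputable def u1 : H4 := e 0 0 0 0 + e 1 1 1 1
noncomputable def u2 : H4 := e 0 1 1 0 + e 1 0 0 1
noncomputable def u3 : H4 := e 0 1 0 1 + e 1 0 1 0
noncomputable def u4 : H4 := e 0 0 1 1 + e 1 1 0 0

noncomputable def Jm : SL2 := ⟨!![0, 1; -1, 0], by norm_num [Matrix.det_fin_two_of]⟩
noncomputable def Km : SL2 := ⟨!![0, Complex.I; Complex.I, 0], by
  norm_num [Matrix.det_fin_two_of, Complex.I_mul_I]⟩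
noncomputable def negI : SL2 := ⟨!![-1, 0; 0, -1], by norm_num [Matrix.det_fin_two_of]⟩

/-!
Write `s` as a `4 × 4` matrix `S`, indexing rows by the first two tensor factors and columns by
the last two; then `(A, B, C, D)` acts by `S ↦ (A ⊗ B) S (C ⊗ D)ᵀ`. For `U, V ∈ SL(2)` the
matrix `U ⊗ V` preserves the symmetric form `G = J ⊗ J`, and `S` is symmetric, so every
stabilising `(A, B, C, D)` has `A ⊗ B` and `C ⊗ D` commuting with `N = (S G)²`. In a suitable
block decomposition both `S` and `N` are block circulant, and `N` has the four eigenvalues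
`(λ₁ ± λ₄)²`, `(λ₂ ± λ₃)²`, which are distinct exactly under the genericity hypotheses. Hence
`A ⊗ B` and `C ⊗ D` are block circulant too, which forces `A = ±Q`, `B = ±Q` for one of the
four quaternion units `Q ∈ {1, J, K, JK}`, and likewise for `C, D`. Dividing out `(Q, Q, Q, Q)`,
which stabilises `s`, leaves an element with two scalar components; evaluated on `s` it shows
that the other two components are scalar as well and that the four signs multiply to `1`. This
gives the `4 · 8 = 32` elements `(±Q, ±Q, ±Q, ±Q)` with an even number of minus signs, all of
which lie in the subgroup generated by the four given elements.
-/

open Matrix Kronecker Complex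

abbrev M2 := Matrix (Fin 2) (Fin 2) ℂ

def toMatrix (x : H4) : Matrix (Fin 2 × Fin 2) (Fin 2 × Fin 2) ℂ :=
  of fun i j => x i.1 i.2 j.1 j.2

theorem toMatrix_injective : Function.Injective toMatrix := fun _ _ h => by
  funext i1 i2 i3 i4
  exact congrFun₂ h (i1, i2) (i3, i4)

theorem toMatrix_act (g : G4) (x : H4) :
    toMatrix (act g x) =
      ((g.1 : M2) ⊗ₖ (g.2.1 : M2)) * toMatrix x * ((g.2.2.1 : M2) ⊗ₖ (g.2.2.2 : M2))ᵀ := by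
  ext ⟨i1, i2⟩ ⟨i3, i4⟩
  simp only [toMatrix, act, Fin.sum_univ_two, of_apply, mul_apply, kroneckerMap_apply,
    Fintype.sum_prod_type, transpose_apply]
  ring

theorem act_one (x : H4) : act 1 x = x :=
  toMatrix_injective <| by simp [toMatrix_act]

theorem act_mul (g h : G4) (x : H4) : act (g * h) x = act g (act h x) :=
  toMatrix_injective <| by
    rw [toMatrix_act, toMatrix_act, toMatrix_act]
    -- re-elaborate the coercions of the products so that `coe_mul` can rewrite them
    change ((g.1 * h.1 : SL2) : M2) ⊗ₖ ((g.2.1 * h.2.1 : SL2) : M2) * _ *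
      (((g.2.2.1 * h.2.2.1 : SL2) : M2) ⊗ₖ ((g.2.2.2 * h.2.2.2 : SL2) : M2))ᵀ = _
    simp only [Matrix.SpecialLinearGroup.coe_mul, mul_kronecker_mul, transpose_mul, mul_assoc]

def stabilizerSubgroup (s : H4) : Subgroup G4 where
  carrier := {g | act g s = s}
  one_mem' := act_one s
  mul_mem' {g h} hg hh := by
    change act (g * h) s = s
    rw [act_mul, hh, hg]
  inv_mem' {g} hg := by
    change act g⁻¹ s = s
    conv_lhs => rw [← hg, ← act_mul, inv_mul_cancel, act_one]

theorem transpose_mul_J_mul {R : Type*} [CommRing R] (U : Matrix (Fin 2) (Fin 2) R) :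
    Uᵀ * !![0, 1; -1, 0] * U = U.det • !![0, 1; -1, 0] := by
  ext i j
  fin_cases i <;> fin_cases j <;> simp [mul_apply, Fin.sum_univ_two, det_fin_two] <;> ring

theorem kronecker_transpose_mul_JJ_mul {R : Type*} [CommRing R]
    {U V : Matrix (Fin 2) (Fin 2) R} (hU : U.det = 1) (hV : V.det = 1) :
    (U ⊗ₖ V)ᵀ * (!![0, 1; -1, 0] ⊗ₖ !![0, 1; -1, 0]) * (U ⊗ₖ V) =
      !![0, 1; -1, 0] ⊗ₖ !![0, 1; -1, 0] := by
  rw [← kroneckerMap_transpose, ← mul_kronecker_mul, ← mul_kronecker_mul,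
    transpose_mul_J_mul, transpose_mul_J_mul, hU, hV, one_smul]

theorem commute_of_mul_mul_transpose_eq {R ι : Type*} [CommRing R] [Fintype ι]
    {S G E F : Matrix ι ι R} (hS : Sᵀ = S) (hE : Eᵀ * G * E = G) (hF : Fᵀ * G * F = G)
    (h : E * S * Fᵀ = S) :
    Commute E (S * G * (S * G)) ∧ Commute F (S * G * (S * G)) := by
  have h' : F * S * Eᵀ = S := by
    simpa [transpose_mul, hS, mul_assoc] using congrArg transpose h
  have hE' : E * (S * G) = S * G * F :=
    calc E * (S * G) = E * S * (Fᵀ * G * F) := by rw [hF, mul_assoc]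
      _ = E * S * Fᵀ * G * F := by simp only [mul_assoc]
      _ = S * G * F := by rw [h]
  have hF' : F * (S * G) = S * G * E :=
    calc F * (S * G) = F * S * (Eᵀ * G * E) := by rw [hE, mul_assoc]
      _ = F * S * Eᵀ * G * E := by simp only [mul_assoc]
      _ = S * G * E := by rw [h']
  constructor
  · change E * (S * G * (S * G)) = S * G * (S * G) * E
    rw [← mul_assoc, hE', mul_assoc, hF', ← mul_assoc]
  · change F * (S * G * (S * G)) = S * G * (S * G) * F
    rw [← mul_assoc, hF', mul_assoc, hE', ← mul_assoc]

section BlockCirculant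

variable {R : Type*}

/-- The matrix with circulant blocks `[[α, β], [β, α]]` on the indices `{(0,0), (1,1)}` and
`[[γ, δ], [δ, γ]]` on `{(0,1), (1,0)}`, and zeros elsewhere. -/
def blockCirculant [Zero R] (α β γ δ : R) : Matrix (Fin 2 × Fin 2) (Fin 2 × Fin 2) R :=
  of fun i j =>
    if i.1 = i.2 then (if j.1 = j.2 then (if i = j then α else β) else 0)
    else (if j.1 = j.2 then 0 else (if i = j then γ else δ))

def IsBlockCirculant [Zero R] (X : Matrix (Fin 2 × Fin 2) (Fin 2 × Fin 2) R) : Prop :=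
  ∃ α β γ δ, X = blockCirculant α β γ δ

theorem blockCirculant_transpose [Zero R] (α β γ δ : R) :
    (blockCirculant α β γ δ)ᵀ = blockCirculant α β γ δ := by
  ext ⟨i1, i2⟩ ⟨j1, j2⟩
  fin_cases i1 <;> fin_cases i2 <;> fin_cases j1 <;> fin_cases j2 <;> rfl

theorem blockCirculant_mul [CommRing R] (α β γ δ α' β' γ' δ' : R) :
    blockCirculant α β γ δ * blockCirculant α' β' γ' δ' =
      blockCirculant (α * α' + β * β') (α * β' + β * α') (γ * γ' + δ * δ')
        (γ * δ' + δ * γ') := by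
  ext ⟨i1, i2⟩ ⟨j1, j2⟩
  fin_cases i1 <;> fin_cases i2 <;> fin_cases j1 <;> fin_cases j2 <;>
    simp [blockCirculant, mul_apply, Fintype.sum_prod_type] <;> ring

theorem smul_blockCirculant [Zero R] [SMulZeroClass R R] (c α β γ δ : R) :
    c • blockCirculant α β γ δ = blockCirculant (c • α) (c • β) (c • γ) (c • δ) := by
  ext ⟨i1, i2⟩ ⟨j1, j2⟩
  fin_cases i1 <;> fin_cases i2 <;> fin_cases j1 <;> fin_cases j2 <;> simp [blockCirculant]

theorem blockCirculant_inj [Zero R] {α β γ δ α' β' γ' δ' : R} :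
    blockCirculant α β γ δ = blockCirculant α' β' γ' δ' ↔
      α = α' ∧ β = β' ∧ γ = γ' ∧ δ = δ' := by
  refine ⟨fun h => ⟨?_, ?_, ?_, ?_⟩, fun ⟨rfl, rfl, rfl, rfl⟩ => rfl⟩
  · simpa [blockCirculant] using congrFun₂ h (0, 0) (0, 0)
  · simpa [blockCirculant] using congrFun₂ h (0, 0) (1, 1)
  · simpa [blockCirculant] using congrFun₂ h (0, 1) (0, 1)
  · simpa [blockCirculant] using congrFun₂ h (0, 1) (1, 0)

theorem J_kronecker_J [CommRing R] :
    !![(0 : R), 1; -1, 0] ⊗ₖ !![(0 : R), 1; -1, 0] = blockCirculant 0 1 0 (-1) := by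
  ext ⟨i1, i2⟩ ⟨j1, j2⟩
  fin_cases i1 <;> fin_cases i2 <;> fin_cases j1 <;> fin_cases j2 <;> simp [blockCirculant]

end BlockCirculant

section Commutant

variable {K : Type*} [Field K]

theorem eq_zero_of_intertwines {α β γ δ y₁₁ y₁₂ y₂₁ y₂₂ : K} (h2 : (2 : K) ≠ 0)
    (hpp : α + β ≠ γ + δ) (hpm : α + β ≠ γ - δ) (hmp : α - β ≠ γ + δ) (hmm : α - β ≠ γ - δ)
    (h₁₁ : y₁₁ * γ + y₁₂ * δ = α * y₁₁ + β * y₂₁) (h₁₂ : y₁₁ * δ + y₁₂ * γ = α * y₁₂ + β * y₂₂)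
    (h₂₁ : y₂₁ * γ + y₂₂ * δ = β * y₁₁ + α * y₂₁) (h₂₂ : y₂₁ * δ + y₂₂ * γ = β * y₁₂ + α * y₂₂) :
    y₁₁ = 0 ∧ y₁₂ = 0 ∧ y₂₁ = 0 ∧ y₂₂ = 0 := by
  -- pair `y` with the eigenvectors `(1, ±1)` of the two circulants on either side
  have epp : y₁₁ + y₁₂ + y₂₁ + y₂₂ = 0 := (mul_eq_zero.1 (by
    linear_combination (-1 : K) * (h₁₁ + h₁₂ + h₂₁ + h₂₂) :
    (α + β - (γ + δ)) * (y₁₁ + y₁₂ + y₂₁ + y₂₂) = 0)).resolve_left (sub_ne_zero.2 hpp)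
  have epm : y₁₁ - y₁₂ + y₂₁ - y₂₂ = 0 := (mul_eq_zero.1 (by
    linear_combination (-1 : K) * (h₁₁ - h₁₂ + h₂₁ - h₂₂) :
    (α + β - (γ - δ)) * (y₁₁ - y₁₂ + y₂₁ - y₂₂) = 0)).resolve_left (sub_ne_zero.2 hpm)
  have emp : y₁₁ + y₁₂ - y₂₁ - y₂₂ = 0 := (mul_eq_zero.1 (by
    linear_combination (-1 : K) * (h₁₁ + h₁₂ - h₂₁ - h₂₂) :
    (α - β - (γ + δ)) * (y₁₁ + y₁₂ - y₂₁ - y₂₂) = 0)).resolve_left (sub_ne_zero.2 hmp)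
  have emm : y₁₁ - y₁₂ - y₂₁ + y₂₂ = 0 := (mul_eq_zero.1 (by
    linear_combination (-1 : K) * (h₁₁ - h₁₂ - h₂₁ + h₂₂) :
    (α - β - (γ - δ)) * (y₁₁ - y₁₂ - y₂₁ + y₂₂) = 0)).resolve_left (sub_ne_zero.2 hmm)
  have h4 : (4 : K) ≠ 0 := by
    simpa [show (4 : K) = 2 * 2 by norm_num] using h2
  refine ⟨?_, ?_, ?_, ?_⟩ <;> refine (mul_eq_zero.1 ?_).resolve_left h4
  · linear_combination epp + epm + emp + emm
  · linear_combination epp - epm + emp - emm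
  · linear_combination epp + epm - emp - emm
  · linear_combination epp - epm - emp + emm

theorem isBlockCirculant_of_commute {X : Matrix (Fin 2 × Fin 2) (Fin 2 × Fin 2) K}
    {α β γ δ : K} (hne : [α + β, α - β, γ + δ, γ - δ].Nodup)
    (hX : Commute X (blockCirculant α β γ δ)) : IsBlockCirculant X := by
  simp only [List.nodup_cons, List.mem_cons, List.not_mem_nil, or_false, not_or,
    List.nodup_nil, and_true, not_false_eq_true] at hne
  obtain ⟨⟨hβ, hpp, hpm⟩, ⟨hmp, hmm⟩, hδ⟩ := hne
  have h2β : 2 * β ≠ 0 := fun h => hβ (by linear_combination h)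
  have h2δ : 2 * δ ≠ 0 := fun h => hδ (by linear_combination h)
  have e : ∀ i j, (X * blockCirculant α β γ δ) i j = (blockCirculant α β γ δ * X) i j :=
    fun i j => congrFun₂ hX.eq i j
  have e₁ := e (0, 0) (0, 1); have e₂ := e (0, 0) (1, 0)
  have e₃ := e (1, 1) (0, 1); have e₄ := e (1, 1) (1, 0)
  have f₁ := e (0, 1) (0, 0); have f₂ := e (0, 1) (1, 1)
  have f₃ := e (1, 0) (0, 0); have f₄ := e (1, 0) (1, 1)
  have k₁ := e (0, 0) (0, 0); have k₂ := e (0, 0) (1, 1)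
  have k₃ := e (0, 1) (0, 1); have k₄ := e (0, 1) (1, 0)
  simp only [blockCirculant, mul_apply, of_apply, zero_ne_one, ↓reduceIte, mul_ite, mul_zero,
    Fintype.sum_prod_type, Prod.mk.injEq, Fin.sum_univ_two, and_false, and_true, zero_add,
    one_ne_zero, add_zero, ite_mul, zero_mul, Finset.sum_ite_eq, Finset.mem_univ, and_self]
    at e₁ e₂ e₃ e₄ f₁ f₂ f₃ f₄ k₁ k₂ k₃ k₄
  have h2 : (2 : K) ≠ 0 := left_ne_zero_of_mul h2β
  obtain ⟨u₁, u₂, u₃, u₄⟩ := eq_zero_of_intertwines h2 hpp hpm hmp hmm e₁ e₂ e₃ e₄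
  obtain ⟨v₁, v₂, v₃, v₄⟩ := eq_zero_of_intertwines h2 (Ne.symm hpp) (Ne.symm hmp)
    (Ne.symm hpm) (Ne.symm hmm) f₁ f₂ f₃ f₄
  have w₁ : X (1, 1) (0, 0) = X (0, 0) (1, 1) :=
    mul_left_cancel₀ (right_ne_zero_of_mul h2β) (by linear_combination -k₁)
  have w₂ : X (1, 1) (1, 1) = X (0, 0) (0, 0) :=
    mul_left_cancel₀ (right_ne_zero_of_mul h2β) (by linear_combination -k₂)
  have w₃ : X (1, 0) (0, 1) = X (0, 1) (1, 0) :=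
    mul_left_cancel₀ (right_ne_zero_of_mul h2δ) (by linear_combination -k₃)
  have w₄ : X (1, 0) (1, 0) = X (0, 1) (0, 1) :=
    mul_left_cancel₀ (right_ne_zero_of_mul h2δ) (by linear_combination -k₄)
  refine ⟨X (0, 0) (0, 0), X (0, 0) (1, 1), X (0, 1) (0, 1), X (0, 1) (1, 0), ?_⟩
  ext ⟨i1, i2⟩ ⟨j1, j2⟩
  fin_cases i1 <;> fin_cases i2 <;> fin_cases j1 <;> fin_cases j2 <;>
    simp [blockCirculant, *]

end Commutant

noncomputable def quatUnit : Fin 4 → SL2 := ![1, Jm, Km, Jm * Km]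

theorem coe_quatUnit_zero : (quatUnit 0 : M2) = !![1, 0; 0, 1] := by
  simp [quatUnit, one_fin_two]

theorem coe_quatUnit_one : (quatUnit 1 : M2) = !![0, 1; -1, 0] := rfl

theorem coe_quatUnit_two : (quatUnit 2 : M2) = !![0, I; I, 0] := rfl

theorem coe_quatUnit_three : (quatUnit 3 : M2) = !![I, 0; 0, -I] := by
  change ((Jm * Km : SL2) : M2) = _
  rw [Matrix.SpecialLinearGroup.coe_mul]
  simp [Jm, Km]

theorem quatUnit_kronecker_quatUnit (m : Fin 4) :
    (quatUnit m : M2) ⊗ₖ (quatUnit m : M2) = blockCirculant (![1, 0, 0, -1] m)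
      (![0, 1, -1, 0] m) (![1, 0, 0, 1] m) (![0, -1, -1, 0] m) := by
  fin_cases m <;>
  · simp only [Fin.zero_eta, Fin.mk_one, Fin.reduceFinMk, coe_quatUnit_zero, coe_quatUnit_one,
      coe_quatUnit_two, coe_quatUnit_three]
    ext ⟨i1, i2⟩ ⟨j1, j2⟩
    fin_cases i1 <;> fin_cases i2 <;> fin_cases j1 <;> fin_cases j2 <;> simp [blockCirculant]

theorem quatUnit_kronecker_quatUnit_injective :
    Function.Injective fun m => (quatUnit m : M2) ⊗ₖ (quatUnit m : M2) := by
  intro m m' h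
  simp only [quatUnit_kronecker_quatUnit, blockCirculant_inj] at h
  fin_cases m <;> fin_cases m' <;> norm_num at h <;> rfl

theorem pair_eq_or_eq_neg {a d p s : ℂ} (had : a * d = 1) (hps : p * s = 1)
    (h₁ : a * p = d * s) (h₂ : a * s = d * p) : (d = a ∧ s = p) ∨ (d = -a ∧ s = -p) := by
  have ha : a ≠ 0 := left_ne_zero_of_mul_eq_one had
  have hsq : (d - a) * (d + a) = 0 := by
    linear_combination (a ^ 2 - d ^ 2) * hps - (a * s) * h₁ - (d * s) * h₂
  rcases mul_eq_zero.1 hsq with h | h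
  · exact .inl ⟨by linear_combination h, mul_left_cancel₀ ha (by linear_combination h₂ + p * h)⟩
  · exact .inr ⟨by linear_combination h, mul_left_cancel₀ ha (by linear_combination h₂ + p * h)⟩

theorem exists_quatUnit_of_diagonal {a d p s : ℂ} (had : a * d = 1) (hps : p * s = 1)
    (h₁ : a * p = d * s) (h₂ : a * s = d * p) :
    ∃ (m : Fin 4) (x y : ℂ), x ^ 2 = 1 ∧ y ^ 2 = 1 ∧
      !![a, 0; 0, d] = x • (quatUnit m : M2) ∧ !![p, 0; 0, s] = y • (quatUnit m : M2) := by
  rcases pair_eq_or_eq_neg had hps h₁ h₂ with ⟨rfl, rfl⟩ | ⟨rfl, rfl⟩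
  · refine ⟨0, d, s, by linear_combination had, by linear_combination hps, ?_, ?_⟩ <;>
      simp [coe_quatUnit_zero]
  · refine ⟨3, -a * I, -p * I, by linear_combination a ^ 2 * I_sq + had,
      by linear_combination p ^ 2 * I_sq + hps, ?_, ?_⟩ <;>
      simp [coe_quatUnit_three, mul_assoc]

theorem exists_quatUnit_of_antidiagonal {b c q r : ℂ} (hbc : b * c = -1) (hqr : q * r = -1)
    (h₁ : b * q = c * r) (h₂ : b * r = c * q) :
    ∃ (m : Fin 4) (x y : ℂ), x ^ 2 = 1 ∧ y ^ 2 = 1 ∧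
      !![0, b; c, 0] = x • (quatUnit m : M2) ∧ !![0, q; r, 0] = y • (quatUnit m : M2) := by
  rcases pair_eq_or_eq_neg (a := b) (d := -c) (p := q) (s := -r) (by linear_combination -hbc)
    (by linear_combination -hqr) (by linear_combination h₁) (by linear_combination -h₂)
    with ⟨hc, hr⟩ | ⟨hc, hr⟩
  · obtain rfl : c = -b := by linear_combination -hc
    obtain rfl : r = -q := by linear_combination -hr
    refine ⟨1, b, q, by linear_combination -hbc, by linear_combination -hqr, ?_, ?_⟩ <;>
      simp [coe_quatUnit_one]
  · obtain rfl : b = c := by linear_combination hc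
    obtain rfl : q = r := by linear_combination hr
    refine ⟨2, -b * I, -q * I, by linear_combination b ^ 2 * I_sq - hbc,
      by linear_combination q ^ 2 * I_sq - hqr, ?_, ?_⟩ <;>
      simp [coe_quatUnit_two, mul_assoc]

theorem exists_quatUnit_of_kronecker_eq_blockCirculant {A B : M2} (hA : A.det = 1)
    (hB : B.det = 1) {α β γ δ : ℂ} (h : A ⊗ₖ B = blockCirculant α β γ δ) :
    ∃ (m : Fin 4) (x y : ℂ), x ^ 2 = 1 ∧ y ^ 2 = 1 ∧
      A = x • (quatUnit m : M2) ∧ B = y • (quatUnit m : M2) := by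
  obtain ⟨a, b, c, d, rfl⟩ : ∃ a b c d, A = !![a, b; c, d] := ⟨_, _, _, _, A.eta_fin_two⟩
  obtain ⟨p, q, r, s, rfl⟩ : ∃ p q r s, B = !![p, q; r, s] := ⟨_, _, _, _, B.eta_fin_two⟩
  rw [det_fin_two_of] at hA hB
  have e := fun i j => congrFun₂ h i j
  have aq := e (0, 0) (0, 1); have bp := e (0, 0) (1, 0)
  have ar := e (0, 1) (0, 0); have bs := e (0, 1) (1, 1)
  have cp := e (1, 0) (0, 0); have dq := e (1, 0) (1, 1)
  have ap := e (0, 0) (0, 0); have ds := e (1, 1) (1, 1)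
  have bq := e (0, 0) (1, 1); have cr := e (1, 1) (0, 0)
  have as := e (0, 1) (0, 1); have dp := e (1, 0) (1, 0)
  have br := e (0, 1) (1, 0); have cq := e (1, 0) (0, 1)
  simp only [kroneckerMap_apply, of_apply, cons_val', cons_val_zero, cons_val_fin_one,
    cons_val_one, blockCirculant, ↓reduceIte, zero_ne_one, mul_eq_zero, one_ne_zero,
    Prod.mk.injEq, and_self] at aq bp ar bs cp dq ap ds bq cr as dp br cq
  by_cases ha : a = 0
  · subst ha
    have hb : b ≠ 0 := by rintro rfl; simp at hA
    obtain rfl : p = 0 := bp.resolve_left hb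
    obtain rfl : s = 0 := bs.resolve_left hb
    have hq : q ≠ 0 := by rintro rfl; simp at hB
    obtain rfl : d = 0 := dq.resolve_right hq
    exact exists_quatUnit_of_antidiagonal (by linear_combination -hA) (by linear_combination -hB)
      (bq.trans cr.symm) (br.trans cq.symm)
  · obtain rfl : q = 0 := aq.resolve_left ha
    obtain rfl : r = 0 := ar.resolve_left ha
    have hp : p ≠ 0 := by rintro rfl; simp at hB
    obtain rfl : b = 0 := bp.resolve_right hp
    obtain rfl : c = 0 := cp.resolve_right hp
    exact exists_quatUnit_of_diagonal (by linear_combination hA) (by linear_combination hB)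
      (ap.trans ds.symm) (as.trans dp.symm)

noncomputable def sign (b : Bool) : SL2 := bif b then negI else 1

def signScalar (b : Bool) : ℂ := bif b then -1 else 1

theorem coe_sign (b : Bool) : (sign b : M2) = signScalar b • 1 := by
  cases b
  · simp [sign, signScalar]
  · change (negI : M2) = (-1 : ℂ) • 1
    ext i j
    fin_cases i <;> fin_cases j <;> simp [negI]

theorem coe_sign_mul (b : Bool) (U : SL2) :
    ((sign b * U : SL2) : M2) = signScalar b • (U : M2) := by
  rw [Matrix.SpecialLinearGroup.coe_mul, coe_sign, smul_one_mul]

theorem signScalar_sq (b : Bool) : signScalar b ^ 2 = 1 := by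
  cases b <;> norm_num [signScalar]

theorem exists_signScalar_eq {x : ℂ} (hx : x ^ 2 = 1) : ∃ b, signScalar b = x := by
  rcases sq_eq_one_iff.1 hx with rfl | rfl
  exacts [⟨false, rfl⟩, ⟨true, rfl⟩]

theorem eq_xor_of_signScalar_mul_eq_one {b₁ b₂ b₃ b₄ : Bool}
    (h : signScalar b₁ * signScalar b₂ * (signScalar b₃ * signScalar b₄) = 1) :
    b₄ = (b₁ ^^ b₂ ^^ b₃) := by
  cases b₁ <;> cases b₂ <;> cases b₃ <;> cases b₄ <;> norm_num [signScalar] at h <;> rfl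

theorem negI_mul_negI : negI * negI = 1 := Subtype.ext <| by
  rw [Matrix.SpecialLinearGroup.coe_mul]
  simp [negI, one_fin_two]

theorem Jm_mul_Jm : Jm * Jm = negI := Subtype.ext <| by
  rw [Matrix.SpecialLinearGroup.coe_mul]
  simp [Jm, negI]

theorem sign_xor (a c : Bool) : sign (a ^^ c) = sign a * sign c := by
  cases a <;> cases c <;> simp [sign, negI_mul_negI]

theorem sign_injective : Function.Injective sign := by
  have : negI ≠ 1 := fun h => by
    have h00 := congrArg (fun U : SL2 => (U : M2) 0 0) h
    norm_num [negI] at h00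
  intro b b' h
  cases b <;> cases b' <;> simp_all [sign, eq_comm]

theorem exists_sign_quatUnit_of_isBlockCirculant {A B : SL2}
    (h : IsBlockCirculant ((A : M2) ⊗ₖ (B : M2))) :
    ∃ m b b', A = sign b * quatUnit m ∧ B = sign b' * quatUnit m := by
  obtain ⟨α, β, γ, δ, h⟩ := h
  obtain ⟨m, x, y, hx, hy, hA, hB⟩ := exists_quatUnit_of_kronecker_eq_blockCirculant A.2 B.2 h
  obtain ⟨b, rfl⟩ := exists_signScalar_eq hx
  obtain ⟨b', rfl⟩ := exists_signScalar_eq hy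
  exact ⟨m, b, b', Subtype.ext (by rw [coe_sign_mul, hA]), Subtype.ext (by rw [coe_sign_mul, hB])⟩

theorem sign_mul_quatUnit_inj {b b' : Bool} {m m' : Fin 4}
    (h : sign b * quatUnit m = sign b' * quatUnit m') : b = b' ∧ m = m' := by
  obtain rfl : m = m' := quatUnit_kronecker_quatUnit_injective <| by
    simpa only [coe_sign_mul, smul_kronecker, kronecker_smul, smul_smul, ← sq, signScalar_sq,
      one_smul] using congrArg (fun U : SL2 => (U : M2) ⊗ₖ (U : M2)) h
  exact ⟨sign_injective (mul_right_cancel h), rfl⟩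

noncomputable def diag4 (U : SL2) : G4 := (U, U, U, U)

noncomputable def signs (b₁ b₂ b₃ : Bool) : G4 :=
  (sign b₁, sign b₂, sign b₃, sign (b₁ ^^ b₂ ^^ b₃))

noncomputable def signedQuat (p : Fin 4 × Bool × Bool × Bool) : G4 :=
  signs p.2.1 p.2.2.1 p.2.2.2 * diag4 (quatUnit p.1)

noncomputable def sTensor (l₁ l₂ l₃ l₄ : ℂ) : H4 := l₁ • u1 + l₂ • u2 + l₃ • u3 + l₄ • u4

def NeSignedSum (l₁ l₂ l₃ l₄ : ℂ) : Prop :=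
  ∀ e₂ e₃ e₄ : ℂ, (e₂ = 1 ∨ e₂ = -1) → (e₃ = 1 ∨ e₃ = -1) → (e₄ = 1 ∨ e₄ = -1) →
    l₁ ≠ e₂ * l₂ + e₃ * l₃ + e₄ * l₄

section Stabilizer

variable {l₁ l₂ l₃ l₄ : ℂ}

theorem toMatrix_sTensor : toMatrix (sTensor l₁ l₂ l₃ l₄) = blockCirculant l₁ l₄ l₃ l₂ := by
  ext ⟨i1, i2⟩ ⟨j1, j2⟩
  fin_cases i1 <;> fin_cases i2 <;> fin_cases j1 <;> fin_cases j2 <;>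
    simp [sTensor, toMatrix, blockCirculant, u1, u2, u3, u4, e]

theorem mem_stabilizer_sTensor_iff {g : G4} :
    g ∈ stabilizerSubgroup (sTensor l₁ l₂ l₃ l₄) ↔
      ((g.1 : M2) ⊗ₖ (g.2.1 : M2)) * blockCirculant l₁ l₄ l₃ l₂ *
        ((g.2.2.1 : M2) ⊗ₖ (g.2.2.2 : M2))ᵀ = blockCirculant l₁ l₄ l₃ l₂ := by
  rw [← toMatrix_sTensor, ← toMatrix_act, toMatrix_injective.eq_iff]
  rfl

theorem nodup_sq_of_neSignedSum (h₁ : l₁ ≠ 0) (h₂ : l₂ ≠ 0) (h₃ : l₃ ≠ 0) (h₄ : l₄ ≠ 0)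
    (hgen : NeSignedSum l₁ l₂ l₃ l₄) :
    [(l₁ + l₄) ^ 2, (l₁ - l₄) ^ 2, (l₂ + l₃) ^ 2, (l₂ - l₃) ^ 2].Nodup := by
  have sq_ne {a b : ℂ} (h : a ≠ b) (h' : a ≠ -b) : a ^ 2 ≠ b ^ 2 :=
    fun e => (sq_eq_sq_iff_eq_or_eq_neg.1 e).elim h h'
  simp only [List.nodup_cons, List.mem_cons, List.not_mem_nil, or_false, not_or,
    List.nodup_nil, and_true, not_false_eq_true]
  refine ⟨⟨sq_ne ?_ ?_, sq_ne ?_ ?_, sq_ne ?_ ?_⟩, ⟨sq_ne ?_ ?_, sq_ne ?_ ?_⟩, sq_ne ?_ ?_⟩ <;>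
    intro h
  · exact h₄ (by linear_combination h / 2)
  · exact h₁ (by linear_combination h / 2)
  · exact hgen 1 1 (-1) (.inl rfl) (.inl rfl) (.inr rfl) (by linear_combination h)
  · exact hgen (-1) (-1) (-1) (.inr rfl) (.inr rfl) (.inr rfl) (by linear_combination h)
  · exact hgen 1 (-1) (-1) (.inl rfl) (.inr rfl) (.inr rfl) (by linear_combination h)
  · exact hgen (-1) 1 (-1) (.inr rfl) (.inl rfl) (.inr rfl) (by linear_combination h)
  · exact hgen 1 1 1 (.inl rfl) (.inl rfl) (.inl rfl) (by linear_combination h)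
  · exact hgen (-1) (-1) 1 (.inr rfl) (.inr rfl) (.inl rfl) (by linear_combination h)
  · exact hgen 1 (-1) 1 (.inl rfl) (.inr rfl) (.inl rfl) (by linear_combination h)
  · exact hgen (-1) 1 1 (.inr rfl) (.inl rfl) (.inl rfl) (by linear_combination h)
  · exact h₃ (by linear_combination h / 2)
  · exact h₂ (by linear_combination h / 2)

theorem isBlockCirculant_kronecker_of_mem_stabilizer
    (hne : [(l₁ + l₄) ^ 2, (l₁ - l₄) ^ 2, (l₂ + l₃) ^ 2, (l₂ - l₃) ^ 2].Nodup) {g : G4}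
    (hg : g ∈ stabilizerSubgroup (sTensor l₁ l₂ l₃ l₄)) :
    IsBlockCirculant ((g.1 : M2) ⊗ₖ (g.2.1 : M2)) ∧
      IsBlockCirculant ((g.2.2.1 : M2) ⊗ₖ (g.2.2.2 : M2)) := by
  have hG (U V : SL2) : ((U : M2) ⊗ₖ (V : M2))ᵀ * blockCirculant 0 1 0 (-1) * (U ⊗ₖ V) =
      blockCirculant 0 1 0 (-1) := by
    simpa only [J_kronecker_J] using kronecker_transpose_mul_JJ_mul U.2 V.2
  have hN : blockCirculant l₁ l₄ l₃ l₂ * blockCirculant 0 1 0 (-1) *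
      (blockCirculant l₁ l₄ l₃ l₂ * blockCirculant 0 1 0 (-1)) =
      blockCirculant (l₁ ^ 2 + l₄ ^ 2) (2 * l₁ * l₄) (l₂ ^ 2 + l₃ ^ 2) (2 * l₂ * l₃) := by
    simp only [blockCirculant_mul, blockCirculant_inj]
    refine ⟨?_, ?_, ?_, ?_⟩ <;> ring
  have hne' : [l₁ ^ 2 + l₄ ^ 2 + 2 * l₁ * l₄, l₁ ^ 2 + l₄ ^ 2 - 2 * l₁ * l₄,
      l₂ ^ 2 + l₃ ^ 2 + 2 * l₂ * l₃, l₂ ^ 2 + l₃ ^ 2 - 2 * l₂ * l₃].Nodup := by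
    convert hne using 1
    simp only [List.cons.injEq, and_true]
    refine ⟨?_, ?_, ?_, ?_⟩ <;> ring
  obtain ⟨hE, hF⟩ := commute_of_mul_mul_transpose_eq (blockCirculant_transpose _ _ _ _)
    (hG _ _) (hG _ _) (mem_stabilizer_sTensor_iff.1 hg)
  rw [hN] at hE hF
  exact ⟨isBlockCirculant_of_commute hne' hE, isBlockCirculant_of_commute hne' hF⟩

theorem eq_zero_and_eq_one_of_smul_mul_quatUnit (h₁ : l₁ ≠ 0) (h₃ : l₃ ≠ 0)
    (hgen : NeSignedSum l₁ l₂ l₃ l₄) {ξ : ℂ} (hξ : ξ ^ 2 = 1) {m : Fin 4}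
    (h : ξ • (blockCirculant l₁ l₄ l₃ l₂ * ((quatUnit m : M2) ⊗ₖ (quatUnit m : M2))) =
      blockCirculant l₁ l₄ l₃ l₂) :
    m = 0 ∧ ξ = 1 := by
  rw [quatUnit_kronecker_quatUnit, blockCirculant_mul, smul_blockCirculant,
    blockCirculant_inj] at h
  obtain ⟨hα, hβ, hγ, hδ⟩ := h
  rcases sq_eq_one_iff.1 hξ with rfl | rfl <;> fin_cases m <;>
    simp only [Fin.zero_eta, Fin.mk_one, Fin.reduceFinMk, cons_val_zero, cons_val_one, cons_val,
      mul_one, mul_zero, add_zero, zero_add, smul_eq_mul, one_mul, neg_mul, mul_neg, neg_neg]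
      at hα hβ hγ hδ
  · exact ⟨rfl, rfl⟩
  · exact (hgen 1 1 1 (.inl rfl) (.inl rfl) (.inl rfl) (by linear_combination hγ - hα)).elim
  · exact (hgen 1 1 (-1) (.inl rfl) (.inl rfl) (.inr rfl) (by linear_combination hγ - hα)).elim
  · exact (h₁ (by linear_combination -hα / 2)).elim
  · exact (h₁ (by linear_combination -hα / 2)).elim
  · exact (hgen 1 (-1) (-1) (.inl rfl) (.inr rfl) (.inr rfl)
      (by linear_combination -hα - hγ)).elim
  · exact (hgen 1 (-1) 1 (.inl rfl) (.inr rfl) (.inl rfl) (by linear_combination -hα - hγ)).elim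
  · exact (h₃ (by linear_combination -hγ / 2)).elim

theorem eq_zero_and_eq_xor_of_mem_stabilizer (h₁ : l₁ ≠ 0) (h₃ : l₃ ≠ 0)
    (hgen : NeSignedSum l₁ l₂ l₃ l₄) {b₁ b₂ b₃ b₄ : Bool} {m : Fin 4}
    (h : (sign b₁, sign b₂, sign b₃ * quatUnit m, sign b₄ * quatUnit m) ∈
      stabilizerSubgroup (sTensor l₁ l₂ l₃ l₄)) :
    m = 0 ∧ b₄ = (b₁ ^^ b₂ ^^ b₃) := by
  rw [mem_stabilizer_sTensor_iff] at h
  simp only [coe_sign, coe_sign_mul, smul_kronecker, kronecker_smul, one_kronecker_one,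
    transpose_smul, Matrix.smul_mul, one_mul, Matrix.mul_smul, smul_smul] at h
  rw [quatUnit_kronecker_quatUnit, blockCirculant_transpose, ← quatUnit_kronecker_quatUnit] at h
  obtain ⟨rfl, hξ⟩ := eq_zero_and_eq_one_of_smul_mul_quatUnit h₁ h₃ hgen
    (by simp only [mul_pow, signScalar_sq, one_mul]) h
  exact ⟨rfl, eq_xor_of_signScalar_mul_eq_one (by linear_combination hξ)⟩

theorem diag4_quatUnit_mem_stabilizer (m : Fin 4) :
    diag4 (quatUnit m) ∈ stabilizerSubgroup (sTensor l₁ l₂ l₃ l₄) := by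
  rw [mem_stabilizer_sTensor_iff]
  simp only [diag4, quatUnit_kronecker_quatUnit, blockCirculant_transpose, blockCirculant_mul,
    blockCirculant_inj]
  fin_cases m <;> simp

theorem signs_mem_stabilizer (b₁ b₂ b₃ : Bool) :
    signs b₁ b₂ b₃ ∈ stabilizerSubgroup (sTensor l₁ l₂ l₃ l₄) := by
  rw [mem_stabilizer_sTensor_iff]
  simp only [signs, coe_sign, smul_kronecker, kronecker_smul, one_kronecker_one, transpose_smul,
    transpose_one, Matrix.smul_mul, one_mul, Matrix.mul_smul, mul_one, smul_smul]
  cases b₁ <;> cases b₂ <;> cases b₃ <;> norm_num [signScalar]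

theorem exists_signedQuat_eq_of_mem_stabilizer (h₁ : l₁ ≠ 0) (h₂ : l₂ ≠ 0) (h₃ : l₃ ≠ 0)
    (h₄ : l₄ ≠ 0) (hgen : NeSignedSum l₁ l₂ l₃ l₄) {g : G4}
    (hg : g ∈ stabilizerSubgroup (sTensor l₁ l₂ l₃ l₄)) : ∃ p, signedQuat p = g := by
  have hne := nodup_sq_of_neSignedSum h₁ h₂ h₃ h₄ hgen
  obtain ⟨m, b₁, b₂, hA, hB⟩ := exists_sign_quatUnit_of_isBlockCirculant
    (isBlockCirculant_kronecker_of_mem_stabilizer hne hg).1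
  set g' := g * (diag4 (quatUnit m))⁻¹ with hg'_def
  have hg' : g' ∈ stabilizerSubgroup (sTensor l₁ l₂ l₃ l₄) :=
    mul_mem hg (inv_mem (diag4_quatUnit_mem_stabilizer m))
  obtain ⟨m', b₃, b₄, hC, hD⟩ := exists_sign_quatUnit_of_isBlockCirculant
    (isBlockCirculant_kronecker_of_mem_stabilizer hne hg').2
  have hg'_eq : g' = (sign b₁, sign b₂, sign b₃ * quatUnit m', sign b₄ * quatUnit m') := by
    refine Prod.ext ?_ (Prod.ext ?_ (Prod.ext hC hD))
    · simp [g', diag4, hA]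
    · simp [g', diag4, hB]
  rw [hg'_eq] at hg'
  obtain ⟨rfl, rfl⟩ := eq_zero_and_eq_xor_of_mem_stabilizer h₁ h₃ hgen hg'
  refine ⟨(m, b₁, b₂, b₃), ?_⟩
  rw [← inv_mul_cancel_right g (diag4 (quatUnit m)), ← hg'_def, hg'_eq]
  simp [signedQuat, signs, diag4, quatUnit]

end Stabilizer

theorem signedQuat_injective : Function.Injective signedQuat := by
  rintro ⟨m, b₁, b₂, b₃⟩ ⟨m', b₁', b₂', b₃'⟩ h
  simp only [signedQuat, signs, diag4, Prod.mk_mul_mk, Prod.mk.injEq] at h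
  obtain ⟨rfl, rfl⟩ := sign_mul_quatUnit_inj h.1
  obtain ⟨rfl, -⟩ := sign_mul_quatUnit_inj h.2.1
  obtain ⟨rfl, -⟩ := sign_mul_quatUnit_inj h.2.2.1
  rfl

noncomputable def generators : Set G4 :=
  {(Jm, Jm, Jm, Jm), (negI, negI, 1, 1), (negI, 1, negI, 1), (Km, Km, Km, Km)}

theorem closure_generators_le_stabilizer (l₁ l₂ l₃ l₄ : ℂ) :
    Subgroup.closure generators ≤ stabilizerSubgroup (sTensor l₁ l₂ l₃ l₄) := by
  rw [Subgroup.closure_le]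
  rintro g (rfl | rfl | rfl | rfl)
  · exact diag4_quatUnit_mem_stabilizer 1
  · exact signs_mem_stabilizer true true false
  · exact signs_mem_stabilizer true false true
  · exact diag4_quatUnit_mem_stabilizer 2

theorem diag4_quatUnit_mem_closure (m : Fin 4) :
    diag4 (quatUnit m) ∈ Subgroup.closure generators := by
  have hJ : diag4 Jm ∈ Subgroup.closure generators :=
    Subgroup.subset_closure (by simp [generators, diag4])
  have hK : diag4 Km ∈ Subgroup.closure generators :=
    Subgroup.subset_closure (by simp [generators, diag4])
  fin_cases m
  · exact one_mem _
  · exact hJ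
  · exact hK
  · change diag4 (Jm * Km) ∈ _
    have : diag4 (Jm * Km) = diag4 Jm * diag4 Km := rfl
    exact this ▸ mul_mem hJ hK

theorem signs_mul_signs (a₁ a₂ a₃ c₁ c₂ c₃ : Bool) :
    signs a₁ a₂ a₃ * signs c₁ c₂ c₃ = signs (a₁ ^^ c₁) (a₂ ^^ c₂) (a₃ ^^ c₃) := by
  simp only [signs, Prod.mk_mul_mk, ← sign_xor, Prod.mk.injEq, true_and]
  congr 1
  revert a₁ a₂ a₃ c₁ c₂ c₃
  decide

theorem signs_mem_closure (b₁ b₂ b₃ : Bool) : signs b₁ b₂ b₃ ∈ Subgroup.closure generators := by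
  have h₁₂ : signs true true false ∈ Subgroup.closure generators :=
    Subgroup.subset_closure (by simp [generators, signs, sign])
  have h₁₃ : signs true false true ∈ Subgroup.closure generators :=
    Subgroup.subset_closure (by simp [generators, signs, sign])
  have hall : signs true true true ∈ Subgroup.closure generators := by
    have : signs true true true = diag4 (quatUnit 1) * diag4 (quatUnit 1) := by
      simp [signs, sign, diag4, quatUnit, Jm_mul_Jm]
    exact this ▸ mul_mem (diag4_quatUnit_mem_closure 1) (diag4_quatUnit_mem_closure 1)
  cases b₁ <;> cases b₂ <;> cases b₃
  · exact one_mem _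
  · simpa [signs_mul_signs] using mul_mem h₁₂ hall
  · simpa [signs_mul_signs] using mul_mem h₁₃ hall
  · simpa [signs_mul_signs] using mul_mem h₁₂ h₁₃
  · simpa [signs_mul_signs] using mul_mem (mul_mem h₁₂ h₁₃) hall
  · exact h₁₃
  · exact h₁₂
  · exact hall

theorem signedQuat_mem_closure (p : Fin 4 × Bool × Bool × Bool) :
    signedQuat p ∈ Subgroup.closure generators :=
  mul_mem (signs_mem_closure _ _ _) (diag4_quatUnit_mem_closure _)

/-- For generic `λ`, the stabiliser in `SL(2,ℂ)⁴` of
`s = λ₁u₁ + λ₂u₂ + λ₃u₃ + λ₄u₄` is the group generated by `(J,J,J,J)`, `(-I,-I,I,I)`,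
`(-I,I,-I,I)`, `(K,K,K,K)`, which is finite of order 32. -/
theorem stabiliser_generic_semisimple (lam1 lam2 lam3 lam4 : ℂ)
    (h1 : lam1 ≠ 0) (h2 : lam2 ≠ 0) (h3 : lam3 ≠ 0) (h4 : lam4 ≠ 0)
    (hgen : ∀ e2 e3 e4 : ℂ, (e2 = 1 ∨ e2 = -1) → (e3 = 1 ∨ e3 = -1) →
      (e4 = 1 ∨ e4 = -1) → lam1 ≠ e2 * lam2 + e3 * lam3 + e4 * lam4) :
    {g : G4 | act g (lam1 • u1 + lam2 • u2 + lam3 • u3 + lam4 • u4) =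
        lam1 • u1 + lam2 • u2 + lam3 • u3 + lam4 • u4} =
      ↑(Subgroup.closure ({(Jm, Jm, Jm, Jm), (negI, negI, 1, 1), (negI, 1, negI, 1),
        (Km, Km, Km, Km)} : Set G4)) ∧
    Nat.card (Subgroup.closure ({(Jm, Jm, Jm, Jm), (negI, negI, 1, 1), (negI, 1, negI, 1),
        (Km, Km, Km, Km)} : Set G4)) = 32 := by
  change (stabilizerSubgroup (sTensor lam1 lam2 lam3 lam4) : Set G4) =
      Subgroup.closure generators ∧ Nat.card (Subgroup.closure generators) = 32
  have hstab :
      (stabilizerSubgroup (sTensor lam1 lam2 lam3 lam4) : Set G4) ⊆ Set.range signedQuat :=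
    fun _ hg => exists_signedQuat_eq_of_mem_stabilizer h1 h2 h3 h4 hgen hg
  have hrange : Set.range signedQuat ⊆ Subgroup.closure generators :=
    Set.range_subset_iff.2 signedQuat_mem_closure
  have hcl : (Subgroup.closure generators : Set G4) ⊆
      stabilizerSubgroup (sTensor lam1 lam2 lam3 lam4) :=
    closure_generators_le_stabilizer lam1 lam2 lam3 lam4
  refine ⟨subset_antisymm (hstab.trans hrange) hcl, ?_⟩
  rw [← SetLike.coe_sort_coe, subset_antisymm (hcl.trans hstab) hrange,
    Nat.card_range_of_injective signedQuat_injective]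
  simp
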